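/- Let R = ℤ[x₂,x₃] with deg x₂ = 2, deg x₃ = 3, and let J ⊆ R be the ideal generated by the elements of positive degree of the subring ℤ[2x₂, x₂², x₃²]. Then x₂x₃ ∉ J, but 2·(x₂x₃) ∈ J. -/

import Mathlib

open MvPolynomial

/-- The subring `ℤ[2x₂, x₂², x₃²]` of `R = ℤ[x₂,x₃]` (image of `CH(BG₂) → CH(BSL₃)`). -/
noncomputable def imBG2 : Subalgebra ℤ (MvPolynomial (Fin 2) ℤ) :=
  Algebra.adjoin ℤ ({2 * X 0, (X 0) ^ 2, (X 1) ^ 2} : Set (MvPolynomial (Fin 2) ℤ))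

/-- The ideal of `R = ℤ[x₂,x₃]` generated by the positive-degree elements (those with zero
constant term) of the subring `ℤ[2x₂, x₂², x₃²]`. -/
noncomputable def Jideal : Ideal (MvPolynomial (Fin 2) ℤ) :=
  Ideal.span {f : MvPolynomial (Fin 2) ℤ | f ∈ imBG2 ∧ constantCoeff f = 0}

/-!
The subring `ℤ[2x₂, x₂², x₃²]` is generated by elements of positive degree, so each of its
positive-degree elements already lies in the ideal generated by these three generators;
hence `J = (2x₂, x₂², x₃²)`. This ideal contains `x₃ · 2x₂`, while the coefficient of `x₂x₃`
of any of its elements is even.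
-/

section Augmentation

variable {R A : Type*} [CommRing R] [CommRing A] [Algebra R A] (ε : A →ₐ[R] R) {s : Set A}

theorem Algebra.sub_algebraMap_mem_span_of_mem_adjoin (hs : ∀ x ∈ s, ε x = 0) {f : A}
    (hf : f ∈ Algebra.adjoin R s) : f - algebraMap R A (ε f) ∈ Ideal.span s := by
  induction hf using Algebra.adjoin_induction with
  | mem x hx => simpa [hs x hx] using Ideal.subset_span hx
  | algebraMap r => simp
  | add x y _ _ hx hy =>
    convert Ideal.add_mem _ hx hy using 1
    simp only [map_add]
    ring
  | mul x y _ _ hx hy =>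
    convert Ideal.add_mem _ (Ideal.mul_mem_left _ x hy)
      (Ideal.mul_mem_right (algebraMap R A (ε y)) _ hx) using 1
    simp only [map_mul]
    ring

theorem Algebra.span_adjoin_inter_ker_eq_span (hs : ∀ x ∈ s, ε x = 0) :
    Ideal.span {f | f ∈ Algebra.adjoin R s ∧ ε f = 0} = Ideal.span s := by
  apply le_antisymm
  · rw [Ideal.span_le]
    rintro f ⟨hf, hεf⟩
    simpa [hεf] using Algebra.sub_algebraMap_mem_span_of_mem_adjoin ε hs hf
  · exact Ideal.span_mono fun x hx => ⟨Algebra.subset_adjoin hx, hs x hx⟩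

end Augmentation

theorem Jideal_eq_span : Jideal = Ideal.span {2 * X 0, X 0 ^ 2, X 1 ^ 2} := by
  have hs : ∀ x ∈ ({2 * X 0, X 0 ^ 2, X 1 ^ 2} : Set (MvPolynomial (Fin 2) ℤ)),
      aeval (0 : Fin 2 → ℤ) x = 0 := by
    simp
  rw [← Algebra.span_adjoin_inter_ker_eq_span _ hs, Jideal, imBG2]
  simp

theorem X_zero_mul_X_one_notMem_span :
    (X 0 * X 1 : MvPolynomial (Fin 2) ℤ) ∉ Ideal.span {2 * X 0, X 0 ^ 2, X 1 ^ 2} := by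
  rw [Ideal.mem_span_insert, not_exists]
  rintro a ⟨_, hb, heq⟩
  obtain ⟨b, c, rfl⟩ := Ideal.mem_span_pair.mp hb
  rw [mul_left_comm, two_mul] at heq
  have hcoeff : (1 : ℤ) = coeff (Finsupp.single 1 1) a + coeff (Finsupp.single 1 1) a := by
    have := congrArg (coeff (Finsupp.single 0 1 + Finsupp.single 1 1)) heq
    simpa [X_pow_eq_monomial, coeff_mul_monomial', coeff_mul_X'] using this
  omega

/-- `x₂x₃ ∉ J` but `2·x₂x₃ ∈ J`: the class of `x₂x₃` is a nonzero `2`-torsion element of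
degree `5` in `R/J = CH(GL₇/SL₃)`. -/
theorem torsion_element_x2x3 :
    X 0 * X 1 ∉ Jideal ∧ 2 * (X 0 * X 1) ∈ Jideal := by
  rw [Jideal_eq_span]
  refine ⟨X_zero_mul_X_one_notMem_span, ?_⟩
  rw [show (2 * (X 0 * X 1) : MvPolynomial (Fin 2) ℤ) = X 1 * (2 * X 0) by ring]
  exact Ideal.mul_mem_left _ _ (Ideal.subset_span (by simp))
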